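/- arXiv:1705.09322 — 2 statements merged into one kernel-verified Lean document; each statement's English description precedes it below -/
import Mathlib

section
/- Let (θ_k) be a sequence in ℝ² satisfying E[θ_{k+1}] = (I + α_k A) E[θ_k], where A is a real 2×2 matrix with A(1,0)ᵀ = e₁(1,0)ᵀ and A(0,1)ᵀ = −5(0,1)ᵀ, α_k ≥ 0, ∑ α_k = ∞, and e₁ > 0. If θ₀ = (η₁, η₂)ᵀ with η₁ ≠ 0, then ‖E[θ_k]‖ → ∞. -/
open Filter in
theorem stmt_5 (α : ℕ → ℝ) (hα : ∀ k, 0 ≤ α k)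
    (hdiv : Tendsto (fun n => ∑ i ∈ Finset.range n, α i) atTop atTop)
    (e₁ : ℝ) (he₁ : 0 < e₁)
    (A : Matrix (Fin 2) (Fin 2) ℝ)
    (hA1 : A.mulVec ![1, 0] = e₁ • ![1, 0])
    (hA2 : A.mulVec ![0, 1] = (-5 : ℝ) • ![0, 1])
    (η₁ η₂ : ℝ) (hη₁ : η₁ ≠ 0)
    (v : ℕ → Fin 2 → ℝ) (hv0 : v 0 = ![η₁, η₂])
    (hrec : ∀ k, v (k + 1) = v k + α k • A.mulVec (v k)) :
    Tendsto (fun k => Real.sqrt ((v k 0) ^ 2 + (v k 1) ^ 2)) atTop atTop := by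
  have hA00 : A 0 0 = e₁ := by
    have := congrFun hA1 0
    simpa [Matrix.mulVec, dotProduct, Fin.sum_univ_two] using this
  have hA01 : A 0 1 = 0 := by
    have := congrFun hA2 0
    simpa [Matrix.mulVec, dotProduct, Fin.sum_univ_two] using this
  -- first coordinate recursion
  have hrec0 : ∀ k, v (k + 1) 0 = (1 + α k * e₁) * v k 0 := by
    intro k
    have := congrFun (hrec k) 0
    simp [Matrix.mulVec, dotProduct, Fin.sum_univ_two, hA00, hA01] at this
    rw [this]; ring
  have key : ∀ k, |η₁| * (1 + e₁ * ∑ i ∈ Finset.range k, α i) ≤ |v k 0| := by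
    intro k
    induction k with
    | zero => simp [hv0]
    | succ k ih =>
      rw [hrec0 k, abs_mul, Finset.sum_range_succ]
      have h1 : (0:ℝ) ≤ 1 + α k * e₁ := by nlinarith [mul_nonneg (hα k) he₁.le]
      have habs : |1 + α k * e₁| = 1 + α k * e₁ := abs_of_nonneg h1
      rw [habs]
      have hS : (0:ℝ) ≤ ∑ i ∈ Finset.range k, α i :=
        Finset.sum_nonneg fun i _ => hα i
      calc |η₁| * (1 + e₁ * (∑ i ∈ Finset.range k, α i + α k))
          ≤ (1 + α k * e₁) * (|η₁| * (1 + e₁ * ∑ i ∈ Finset.range k, α i)) := by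
            have : (0:ℝ) ≤ |η₁| := abs_nonneg _
            nlinarith [mul_nonneg (mul_nonneg this (mul_nonneg (hα k) he₁.le))
              (mul_nonneg he₁.le hS)]
        _ ≤ (1 + α k * e₁) * |v k 0| := by
            exact mul_le_mul_of_nonneg_left ih h1
  have hlow : Tendsto (fun k => |η₁| * (1 + e₁ * ∑ i ∈ Finset.range k, α i)) atTop atTop := by
    apply Tendsto.const_mul_atTop (abs_pos.mpr hη₁)
    exact tendsto_atTop_add_const_left _ 1 (Tendsto.const_mul_atTop he₁ hdiv)
  apply tendsto_atTop_mono _ hlow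
  intro k
  calc |η₁| * (1 + e₁ * ∑ i ∈ Finset.range k, α i) ≤ |v k 0| := key k
    _ = Real.sqrt ((v k 0) ^ 2) := (Real.sqrt_sq_eq_abs _).symm
    _ ≤ Real.sqrt ((v k 0) ^ 2 + (v k 1) ^ 2) := by
        apply Real.sqrt_le_sqrt; nlinarith [sq_nonneg (v k 1)]
end

section
/- Let G = [[0, √β Aᵀ],[−√β A, βM]] with A nonsingular and M symmetric positive definite. Every real eigenvalue μ of G is nonnegative; moreover if z = (x,y) is an eigenvector with Gz = μz and μ = 0 then z = 0, i.e., 0 is not an eigenvalue and all real eigenvalues are strictly positive. -/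
/-!
Writing `z = (x, y)`, the off-diagonal blocks of `G` are `B` and `-Bᵀ` with `B = √β Aᵀ`, so they
cancel in the quadratic form: `z ⬝ G z = β yᵀ M y ≥ 0`. An eigenvector with eigenvalue `μ` thus gives
`μ ‖z‖² ≥ 0`, i.e. `μ ≥ 0`, and `μ = 0` is excluded because `G z = 0` forces first `Aᵀ y = 0`
and then `A x = 0`.
-/

open Matrix

namespace Matrix

variable {m n R : Type*}

theorem mulVec_injective_smul [Fintype n] [CommRing R] [NoZeroDivisors R] {c : R} (hc : c ≠ 0)
    {A : Matrix m n R} (hA : Function.Injective A.mulVec) : Function.Injective (c • A).mulVec :=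
  fun v w h ↦ hA <| smul_right_injective _ hc <| by simpa only [smul_mulVec] using h

variable [Fintype m] [Fintype n]

theorem eq_zero_of_fromBlocks_zero_mulVec_eq_zero [NonUnitalNonAssocSemiring R]
    {B : Matrix m n R} {C : Matrix n m R} (D : Matrix n n R)
    (hB : Function.Injective B.mulVec) (hC : Function.Injective C.mulVec)
    {z : m ⊕ n → R} (hz : fromBlocks 0 B C D *ᵥ z = 0) : z = 0 := by
  obtain ⟨x, y, rfl⟩ : ∃ x y, z = Sum.elim x y := ⟨_, _, (Sum.elim_comp_inl_inr z).symm⟩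
  rw [fromBlocks_mulVec, Sum.elim_comp_inl, Sum.elim_comp_inr, zero_mulVec, zero_add,
    ← Sum.elim_zero_zero, Sum.elim_eq_iff] at hz
  have hy : y = 0 := hB <| by rw [hz.1, mulVec_zero]
  have hx : x = 0 := hC <| by rw [mulVec_zero, ← hz.2, hy, mulVec_zero, add_zero]
  rw [hx, hy, Sum.elim_zero_zero]

theorem sumElim_dotProduct_fromBlocks_zero_neg_transpose_mulVec [CommRing R] (B : Matrix m n R)
    (D : Matrix n n R) (x : m → R) (y : n → R) :
    Sum.elim x y ⬝ᵥ (fromBlocks 0 B (-Bᵀ) D *ᵥ Sum.elim x y) = y ⬝ᵥ (D *ᵥ y) := by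
  rw [fromBlocks_mulVec, Sum.elim_comp_inl, Sum.elim_comp_inr, sumElim_dotProduct_sumElim,
    zero_mulVec, zero_add, neg_mulVec, dotProduct_add, dotProduct_neg, dotProduct_mulVec y,
    vecMul_transpose, dotProduct_comm (B *ᵥ _)]
  abel

theorem nonneg_of_fromBlocks_zero_neg_transpose_mulVec_eq_smul (B : Matrix m n ℝ)
    {D : Matrix n n ℝ} (hD : D.PosSemidef) {μ : ℝ} {z : m ⊕ n → ℝ} (hz0 : z ≠ 0)
    (hz : fromBlocks 0 B (-Bᵀ) D *ᵥ z = μ • z) : 0 ≤ μ := by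
  have hzz : 0 < z ⬝ᵥ z := by
    refine lt_of_le_of_ne ?_ (Ne.symm (dotProduct_self_eq_zero.not.mpr hz0))
    simpa only [star_trivial] using dotProduct_star_self_nonneg z
  obtain ⟨x, y, rfl⟩ : ∃ x y, z = Sum.elim x y := ⟨_, _, (Sum.elim_comp_inl_inr z).symm⟩
  have hquad : μ * (Sum.elim x y ⬝ᵥ Sum.elim x y) = y ⬝ᵥ (D *ᵥ y) := by
    rw [← sumElim_dotProduct_fromBlocks_zero_neg_transpose_mulVec B, hz, dotProduct_smul,
      smul_eq_mul]
  refine nonneg_of_mul_nonneg_left ?_ hzz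
  rw [hquad]
  simpa only [star_trivial] using hD.dotProduct_mulVec_nonneg y

end Matrix

theorem stmt_11_general (d : ℕ) (A M : Matrix (Fin d) (Fin d) ℝ)
    (hA : IsUnit A) (hMpd : M.PosDef)
    (β : ℝ) (hβ : 0 < β)
    (G : Matrix (Fin d ⊕ Fin d) (Fin d ⊕ Fin d) ℝ)
    (hG : G = Matrix.fromBlocks (0 : Matrix (Fin d) (Fin d) ℝ)
      (Real.sqrt β • Aᵀ) (-(Real.sqrt β) • A) (β • M)) :
    (∀ z : Fin d ⊕ Fin d → ℝ, G.mulVec z = 0 → z = 0) ∧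
    (∀ (μ : ℝ) (z : Fin d ⊕ Fin d → ℝ), z ≠ 0 → G.mulVec z = μ • z → 0 < μ) := by
  have hsqrt : √β ≠ 0 := (Real.sqrt_pos.mpr hβ).ne'
  have hker (z : Fin d ⊕ Fin d → ℝ) (hz : G *ᵥ z = 0) : z = 0 := by
    refine eq_zero_of_fromBlocks_zero_mulVec_eq_zero (β • M) ?_ ?_ (hG ▸ hz)
    · exact mulVec_injective_smul hsqrt
        (mulVec_injective_iff_isUnit.mpr ((isUnit_transpose A).mpr hA))
    · exact mulVec_injective_smul (neg_ne_zero.mpr hsqrt) (mulVec_injective_iff_isUnit.mpr hA)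
  refine ⟨hker, fun μ z hz0 hz ↦ ?_⟩
  have hμ : μ ≠ 0 := by
    rintro rfl
    exact hz0 (hker z (by rw [hz, zero_smul]))
  have hG' : G = fromBlocks 0 (√β • Aᵀ) (-(√β • Aᵀ)ᵀ) (β • M) := by
    rw [hG, transpose_smul, transpose_transpose, neg_smul]
  exact (nonneg_of_fromBlocks_zero_neg_transpose_mulVec_eq_smul _
    (hMpd.posSemidef.smul hβ.le) hz0 (hG' ▸ hz)).lt_of_ne' hμ

theorem stmt_11 (d : ℕ) (A M : Matrix (Fin d) (Fin d) ℝ)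
    (hA : IsUnit A) (hMsymm : M.IsSymm) (hMpd : M.PosDef)
    (β : ℝ) (hβ : 0 < β)
    (G : Matrix (Fin d ⊕ Fin d) (Fin d ⊕ Fin d) ℝ)
    (hG : G = Matrix.fromBlocks (0 : Matrix (Fin d) (Fin d) ℝ)
      (Real.sqrt β • Aᵀ) (-(Real.sqrt β) • A) (β • M)) :
    (∀ z : Fin d ⊕ Fin d → ℝ, G.mulVec z = 0 → z = 0) ∧
    (∀ (μ : ℝ) (z : Fin d ⊕ Fin d → ℝ), z ≠ 0 → G.mulVec z = μ • z → 0 < μ) :=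
  stmt_11_general d A M hA hMpd β hβ G hG
end
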